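/- arXiv:0901.1298 — 2 statements merged into one kernel-verified Lean document; each statement's English description precedes it below -/
import Mathlib

section
/- The total F₂-dimension of the cohomology ker(d)/im(d) of the complex (SC(T), d) equals 1 if T admits a perfect matching, and equals 0 otherwise; in particular it is at most 1. -/
/-!
The complex splits along matchings: the configurations with a fixed set `R` of red edges span
the tensor product, over the vertices not covered by `R`, of the two-term complex `+ ↦ −`.
Toggling the sign of one uncovered vertex is a contracting homotopy as soon as there is such a
vertex, so the cohomology lives on the configurations without signs, i.e. on the perfect
matchings. A forest has at most one perfect matching, since two of them differ by a disjoint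
union of cycles.
-/

open Polynomial Matrix

attribute [local instance] Classical.propDecidable

namespace Seifert

variable {V : Type} [Fintype V]

/-- A matching of a graph `G`: a finite set of edges of `G` that are pairwise disjoint. -/
def IsMatching (G : SimpleGraph V) (R : Finset (Sym2 V)) : Prop :=
  (∀ e ∈ R, e ∈ G.edgeSet) ∧
    ∀ e ∈ R, ∀ f ∈ R, e ≠ f → ∀ v : V, v ∈ e → v ∉ f

/-- A perfect matching: a matching covering every vertex. -/
def IsPerfectMatching (G : SimpleGraph V) (R : Finset (Sym2 V)) : Prop :=
  IsMatching G R ∧ ∀ v : V, ∃ e ∈ R, v ∈ e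

/-- A configuration on `G`: a matching (the set of red edges) together with an assignment
of a sign (`true` = plus, `false` = minus) to every vertex not covered by a red edge;
vertices covered by a red edge get `none`. -/
structure Config (G : SimpleGraph V) where
  red : Finset (Sym2 V)
  matching : IsMatching G red
  sign : V → Option Bool
  sign_none : ∀ v : V, sign v = none ↔ ∃ e ∈ red, v ∈ e

instance (G : SimpleGraph V) : Finite (Config G) :=
  Finite.of_injective (fun C => (C.red, C.sign)) (by
    rintro ⟨r, hr, s, hs⟩ ⟨r', hr', s', hs'⟩ h
    simp only [Prod.mk.injEq] at h
    obtain ⟨h1, h2⟩ := h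
    subst h1; subst h2; rfl)

noncomputable instance (G : SimpleGraph V) : Fintype (Config G) := Fintype.ofFinite _

/-- The grading `Q`: the number of minuses. -/
noncomputable def Qg {G : SimpleGraph V} (C : Config G) : ℕ :=
  (Finset.univ.filter fun v : V => C.sign v = some false).card

/-- The grading `E`: the number of minuses plus the number of red edges. -/
noncomputable def Eg {G : SimpleGraph V} (C : Config G) : ℕ := Qg C + C.red.card

/-- `DStep C C'` holds iff `C'` is one of the summands of `D(C)`: it is obtained from `C`
by deleting one red edge `e` and assigning a plus to one endpoint of `e` and a minus to
the other. -/
def DStep {G : SimpleGraph V} (C C' : Config G) : Prop :=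
  ∃ e ∈ C.red, C'.red = C.red.erase e ∧
    (∀ x : V, x ∉ e → C'.sign x = C.sign x) ∧
    ∃ u v : V, e = s(u, v) ∧ C'.sign u = some true ∧ C'.sign v = some false

/-- `dStep C C'` holds iff `C'` is one of the summands of `d(C)`: it is obtained from `C`
by changing the sign of one vertex from plus to minus. -/
def dStep {G : SimpleGraph V} (C C' : Config G) : Prop :=
  C'.red = C.red ∧ ∃ w : V, C.sign w = some true ∧ C'.sign w = some false ∧
    ∀ x : V, x ≠ w → C'.sign x = C.sign x

/-- The linear map on spaces of `F₂`-valued functions induced by a relation `r`: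
the basis vector of `a` is sent to the sum of the basis vectors of all `b` with `r a b`. -/
noncomputable def sumLin {α β : Type} [Fintype α] (r : α → β → Prop) :
    (α → ZMod 2) →ₗ[ZMod 2] (β → ZMod 2) where
  toFun f b := ∑ a : α, if r a b then f a else 0
  map_add' f g := by
    funext b
    simp only [Pi.add_apply]
    rw [← Finset.sum_add_distrib]
    exact Finset.sum_congr rfl fun a _ => by by_cases h : r a b <;> simp [h]
  map_smul' c f := by
    funext b
    simp only [RingHom.id_apply, Pi.smul_apply, smul_eq_mul, Finset.mul_sum]
    exact Finset.sum_congr rfl fun a _ => by by_cases h : r a b <;> simp [h]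

/-- The differential `D` on the total Seifert complex `SC(T)`. -/
noncomputable def Dmap (G : SimpleGraph V) :
    (Config G → ZMod 2) →ₗ[ZMod 2] (Config G → ZMod 2) :=
  sumLin DStep

/-- The differential `d` on the total Seifert complex `SC(T)`. -/
noncomputable def dmap (G : SimpleGraph V) :
    (Config G → ZMod 2) →ₗ[ZMod 2] (Config G → ZMod 2) :=
  sumLin dStep

/-- The graded piece `SC^k(T,n)`: the `F₂`-vector space with basis the configurations
with `Q = k` and `E = n`. -/
abbrev SC (G : SimpleGraph V) (k n : ℤ) : Type :=
  {C : Config G // (Qg C : ℤ) = k ∧ (Eg C : ℤ) = n} → ZMod 2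

/-- The differential `D` between graded pieces. (Mathematically it is nonzero only
from `SC^k(T,n)` to `SC^{k+1}(T,n)`.) -/
noncomputable def Dgr (G : SimpleGraph V) (k n k' n' : ℤ) :
    SC G k n →ₗ[ZMod 2] SC G k' n' :=
  sumLin fun C C' => DStep C.1 C'.1

/-- The dimension of the cohomology `ker g / im f` at the middle term of `A —f→ B —g→ C`
(taking the image of `f` intersected with the kernel of `g`). -/
noncomputable def cohDim {A B M : Type} [AddCommGroup A] [AddCommGroup B] [AddCommGroup M]
    [Module (ZMod 2) A] [Module (ZMod 2) B] [Module (ZMod 2) M]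
    (f : A →ₗ[ZMod 2] B) (g : B →ₗ[ZMod 2] M) : ℕ :=
  Module.finrank (ZMod 2)
    (LinearMap.ker g ⧸ (LinearMap.range f).comap (LinearMap.ker g).subtype)

/-- The dimension of the Seifert cohomology `SH^k(T,n)`. -/
noncomputable def SHdim (G : SimpleGraph V) (k n : ℤ) : ℕ :=
  cohDim (Dgr G (k - 1) n k n) (Dgr G k n (k + 1) n)

/-- The Seifert matrix of a graph with respect to an enumeration of its vertices. -/
noncomputable def seifertMatrix (G : SimpleGraph V) {m : ℕ} (e : V ≃ Fin m) :
    Matrix (Fin m) (Fin m) ℤ := fun i j =>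
  if i = j then -1 else if i < j ∧ G.Adj (e.symm i) (e.symm j) then 1 else 0

/-- The Alexander polynomial `det (t S - Sᵀ)` of a graph with respect to an enumeration
of its vertices. -/
noncomputable def alexDet (G : SimpleGraph V) {m : ℕ} (e : V ≃ Fin m) : Polynomial ℤ :=
  let S : Matrix (Fin m) (Fin m) (Polynomial ℤ) :=
    (seifertMatrix G e).map fun a => (Polynomial.C a : Polynomial ℤ)
  ((X : Polynomial ℤ) • S - Sᵀ).det

/-- The Alexander polynomial of a graph (or forest), defined as the matching polynomial
`Σ_R t^{|R|} (1-t)^{V - 2|R|}`, the sum being over all matchings `R`. -/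
noncomputable def alexMatch (G : SimpleGraph V) : Polynomial ℤ :=
  ∑ R : {R : Finset (Sym2 V) // IsMatching G R},
    X ^ R.1.card * (1 - X) ^ (Fintype.card V - 2 * R.1.card)

open SimpleGraph
open scoped symmDiff

variable {G : SimpleGraph V}

section Matching

omit [Fintype V]

theorem _root_.SimpleGraph.IsAcyclic.eq_bot_of_isCycles [Finite V] {H : SimpleGraph V}
    (hH : H.IsAcyclic) (hc : H.IsCycles) : H = ⊥ := by
  refine eq_bot_iff.mpr fun v w hvw => ?_
  obtain ⟨p, hp, -⟩ := hc.exists_cycle_toSubgraph_verts_eq_connectedComponentSupp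
    (((H.connectedComponentMk v).mem_supp_iff v).mpr rfl) ⟨w, hvw⟩
  exact hH p hp

variable {R R' : Finset (Sym2 V)}

lemma IsMatching.fromEdgeSet_le (hR : IsMatching G R) : fromEdgeSet (R : Set (Sym2 V)) ≤ G :=
  fun _ _ h => G.mem_edgeSet.mp (hR.1 _ h.1)

lemma IsMatching.edgeSet_fromEdgeSet (hR : IsMatching G R) :
    (fromEdgeSet (R : Set (Sym2 V))).edgeSet = R := by
  rw [SimpleGraph.edgeSet_fromEdgeSet, sdiff_eq_left, Set.disjoint_left]
  exact fun e he => G.not_isDiag_of_mem_edgeSet (hR.1 e he)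

lemma IsPerfectMatching.isPerfectMatching_toSubgraph (hR : IsPerfectMatching G R) :
    (G.toSubgraph _ hR.1.fromEdgeSet_le).IsPerfectMatching := by
  refine Subgraph.isPerfectMatching_iff.mpr fun v => ?_
  obtain ⟨e, he, hv⟩ := hR.2 v
  obtain ⟨w, rfl⟩ := Sym2.mem_iff_exists.mp hv
  refine ⟨w, ⟨he, G.ne_of_adj (G.mem_edgeSet.mp (hR.1.1 _ he))⟩, fun w' hw' => ?_⟩
  by_contra hne
  exact hR.1.2 _ hw'.1 _ he (fun h => hne (Sym2.congr_right.mp h)) v (Sym2.mem_mk_left _ _)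
    (Sym2.mem_mk_left _ _)

theorem IsPerfectMatching.eq_of_isAcyclic [Finite V] (hG : G.IsAcyclic)
    (hR : IsPerfectMatching G R) (hR' : IsPerfectMatching G R') : R = R' := by
  have hle : fromEdgeSet (R : Set (Sym2 V)) ∆ fromEdgeSet (R' : Set (Sym2 V)) ≤ G :=
    symmDiff_le_sup.trans (sup_le hR.1.fromEdgeSet_le hR'.1.fromEdgeSet_le)
  have hbot := (hG.anti hle).eq_bot_of_isCycles
    (hR.isPerfectMatching_toSubgraph.symmDiff_isCycles hR'.isPerfectMatching_toSubgraph)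
  have := congrArg edgeSet (symmDiff_eq_bot.mp hbot)
  rw [hR.1.edgeSet_fromEdgeSet, hR'.1.edgeSet_fromEdgeSet] at this
  exact_mod_cast this

end Matching

namespace Config

section Flip

omit [Fintype V]

@[ext]
lemma ext {C C' : Config G} (hred : C.red = C'.red) (hsign : C.sign = C'.sign) : C = C' := by
  cases C; cases C'; simp_all

lemma sign_ne_none_iff (C : Config G) (v : V) : C.sign v ≠ none ↔ ∀ e ∈ C.red, v ∉ e := by
  simp [C.sign_none]

lemma isPerfectMatching_red_iff (C : Config G) :
    IsPerfectMatching G C.red ↔ ∀ v, C.sign v = none :=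
  ⟨fun h v => (C.sign_none v).mpr (h.2 v),
    fun h => ⟨C.matching, fun v => (C.sign_none v).mp (h v)⟩⟩

noncomputable def flip (C : Config G) (w : V) : Config G where
  red := C.red
  matching := C.matching
  sign := Function.update C.sign w ((C.sign w).map not)
  sign_none v := by
    rw [← C.sign_none]
    by_cases h : v = w
    · subst h; simp
    · simp [h]

@[simp] lemma flip_sign_self (C : Config G) (w : V) :
    (C.flip w).sign w = (C.sign w).map not := by
  simp [flip]

lemma flip_sign_of_ne (C : Config G) {v w : V} (h : v ≠ w) : (C.flip w).sign v = C.sign v := by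
  simp [flip, h]

@[simp] lemma flip_flip (C : Config G) (w : V) : (C.flip w).flip w = C := by
  ext1
  · rfl
  · simp [flip, Option.map_map, Function.comp_def]

lemma flip_comm (C : Config G) {v w : V} (h : v ≠ w) : (C.flip v).flip w = (C.flip w).flip v := by
  ext1
  · rfl
  · simp [flip, Function.update_comm h, Function.update_of_ne h, Function.update_of_ne h.symm]

lemma dStep_iff {C C' : Config G} :
    dStep C C' ↔ ∃ w, C'.sign w = some false ∧ C = C'.flip w := by
  constructor
  · rintro ⟨hred, w, hw, hw', hsign⟩
    refine ⟨w, hw', Config.ext hred.symm (funext fun v => ?_)⟩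
    by_cases hv : v = w
    · subst hv; simp [hw, hw']
    · rw [flip_sign_of_ne _ hv, hsign v hv]
  · rintro ⟨w, hw, rfl⟩
    exact ⟨rfl, w, by simp [hw], hw, fun v hv => (flip_sign_of_ne _ hv).symm⟩

end Flip

def minuses (C : Config G) : Finset V := {v | C.sign v = some false}

@[simp] lemma mem_minuses {C : Config G} {v : V} : v ∈ C.minuses ↔ C.sign v = some false := by
  simp [minuses]

lemma minuses_flip_of_sign_eq_true {C : Config G} {u : V} (hu : C.sign u = some true) :
    (C.flip u).minuses = insert u C.minuses := by
  ext v
  by_cases hv : v = u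
  · subst hv; simp [hu]
  · simp [flip_sign_of_ne _ hv, hv]

lemma minuses_eq_empty_of_isPerfectMatching {C : Config G} (hC : IsPerfectMatching G C.red) :
    C.minuses = ∅ := by
  ext v
  simp [C.isPerfectMatching_red_iff.mp hC v]

end Config

open Config

lemma dmap_apply (x : Config G → ZMod 2) (C : Config G) :
    dmap G x C = ∑ w ∈ C.minuses, x (C.flip w) := by
  have himage : ({C' | dStep C' C} : Finset (Config G)) = C.minuses.image C.flip := by
    ext C'
    simp [dStep_iff, eq_comm]
  have hinj : Set.InjOn C.flip C.minuses := by
    intro v hv w hw hvw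
    by_contra hne
    have := congrArg (fun C' => C'.sign v) hvw
    simp only [flip_sign_self, flip_sign_of_ne _ hne, mem_minuses.mp hv] at this
    simp at this
  rw [← Finset.sum_image hinj, ← himage, Finset.sum_filter]
  rfl

lemma dmap_apply_of_isPerfectMatching (x : Config G → ZMod 2) {C : Config G}
    (hC : IsPerfectMatching G C.red) : dmap G x C = 0 := by
  rw [dmap_apply, minuses_eq_empty_of_isPerfectMatching hC, Finset.sum_empty]

/-- A contracting homotopy for `dmap` on configurations with an uncovered vertex: it toggles
an uncovered vertex chosen from the red edges alone, hence the same one for every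
configuration with those red edges. -/
noncomputable def homotopy (x : Config G → ZMod 2) (C : Config G) : ZMod 2 :=
  if h : ∃ u, ∀ e ∈ C.red, u ∉ e then
    if C.sign h.choose = some true then x (C.flip h.choose) else 0
  else 0

lemma homotopy_of_uncovered (x : Config G → ZMod 2) (C : Config G)
    (h : ∃ u, ∀ e ∈ C.red, u ∉ e) :
    homotopy x C = if C.sign h.choose = some true then x (C.flip h.choose) else 0 :=
  dif_pos h

@[simp] lemma homotopy_zero : homotopy (0 : Config G → ZMod 2) = 0 := by
  ext C
  simp [homotopy]

theorem dmap_homotopy_add_homotopy_dmap (x : Config G → ZMod 2) (C : Config G)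
    (h : ∃ u, ∀ e ∈ C.red, u ∉ e) :
    dmap G (homotopy x) C + homotopy (dmap G x) C = x C := by
  rw [homotopy_of_uncovered _ C h, dmap_apply]
  set u := h.choose
  have hflip (y : Config G → ZMod 2) (w : V) : homotopy y (C.flip w) =
      if (C.flip w).sign u = some true then y ((C.flip w).flip u) else 0 :=
    homotopy_of_uncovered y (C.flip w) h
  obtain ⟨b, hb⟩ := Option.ne_none_iff_exists'.mp ((C.sign_ne_none_iff u).mpr h.choose_spec)
  rw [Finset.sum_congr rfl fun w _ => hflip x w]
  cases b
  · have hu : u ∈ C.minuses := mem_minuses.mpr hb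
    rw [Finset.sum_eq_single_of_mem u hu fun w _ hwu => ?_]
    · simp [hb]
    · simp [flip_sign_of_ne _ hwu.symm, hb]
  · have hne : ∀ w ∈ C.minuses, u ≠ w := fun w hw huw => by
      simp [← huw, hb] at hw
    have hu : u ∉ C.minuses := fun hu => hne u hu rfl
    -- both sides contain `∑ w ∈ C.minuses, x ((C.flip u).flip w)`, which cancels mod 2
    rw [if_pos hb, dmap_apply, minuses_flip_of_sign_eq_true hb, Finset.sum_insert hu,
      Config.flip_flip, Finset.sum_congr rfl fun w hw => by
        rw [flip_sign_of_ne _ (hne w hw), if_pos hb, flip_comm _ (hne w hw).symm]]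
    rw [add_left_comm, CharTwo.add_self_eq_zero, add_zero]

lemma mem_range_dmap_of_forall_isPerfectMatching {x : Config G → ZMod 2} (hx : dmap G x = 0)
    (hperf : ∀ C : Config G, IsPerfectMatching G C.red → x C = 0) :
    x ∈ LinearMap.range (dmap G) := by
  refine ⟨homotopy x, funext fun C => ?_⟩
  by_cases hC : IsPerfectMatching G C.red
  · rw [dmap_apply_of_isPerfectMatching _ hC, hperf C hC]
  · have h : ∃ u, ∀ e ∈ C.red, u ∉ e := by
      simpa [isPerfectMatching_red_iff, sign_ne_none_iff] using hC
    rw [← dmap_homotopy_add_homotopy_dmap x C h, hx, homotopy_zero, Pi.zero_apply, add_zero]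

noncomputable def perfectConfigEquiv (G : SimpleGraph V) :
    {C : Config G // IsPerfectMatching G C.red} ≃ {R : Finset (Sym2 V) // IsPerfectMatching G R}
    where
  toFun C := ⟨C.1.red, C.2⟩
  invFun R := ⟨⟨R.1, R.2.1, fun _ => none, fun v => by simpa using R.2.2 v⟩, R.2⟩
  left_inv C := Subtype.ext <| Config.ext rfl <| funext fun v =>
    ((C.1.isPerfectMatching_red_iff.mp C.2 v)).symm
  right_inv _ := rfl

noncomputable def restrictPerfect (G : SimpleGraph V) :
    LinearMap.ker (dmap G) →ₗ[ZMod 2]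
      ({C : Config G // IsPerfectMatching G C.red} → ZMod 2) :=
  (LinearMap.funLeft (ZMod 2) (ZMod 2) Subtype.val).comp (LinearMap.ker (dmap G)).subtype

lemma ker_restrictPerfect (G : SimpleGraph V) :
    LinearMap.ker (restrictPerfect G) =
      (LinearMap.range (dmap G)).comap (LinearMap.ker (dmap G)).subtype := by
  ext ⟨x, hx⟩
  simp only [LinearMap.mem_ker, Submodule.mem_comap, Submodule.coe_subtype]
  constructor
  · intro hres
    exact mem_range_dmap_of_forall_isPerfectMatching hx fun C hC => congrFun hres ⟨C, hC⟩
  · rintro ⟨z, rfl⟩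
    exact funext fun C => dmap_apply_of_isPerfectMatching z C.2

lemma restrictPerfect_surjective (G : SimpleGraph V) :
    Function.Surjective (restrictPerfect G) := by
  intro f
  let x : Config G → ZMod 2 := fun C => if h : IsPerfectMatching G C.red then f ⟨C, h⟩ else 0
  have hx : dmap G x = 0 := funext fun C => by
    refine (dmap_apply x C).trans (Finset.sum_eq_zero fun w hw => dif_neg fun hperf => ?_)
    have := (C.flip w).isPerfectMatching_red_iff.mp hperf w
    simp [mem_minuses.mp hw] at this
  exact ⟨⟨x, hx⟩, funext fun C => dif_pos C.2⟩

theorem cohDim_dmap (G : SimpleGraph V) :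
    cohDim (dmap G) (dmap G) = Nat.card {R : Finset (Sym2 V) // IsPerfectMatching G R} := by
  rw [cohDim, ← ker_restrictPerfect,
    (LinearMap.quotKerEquivOfSurjective _ (restrictPerfect_surjective G)).finrank_eq,
    Module.finrank_fintype_fun_eq_card, Fintype.card_eq_nat_card,
    Nat.card_congr (perfectConfigEquiv G)]

/-- the total dimension of the cohomology of `(SC(T), d)` is `1` if `T`
admits a perfect matching and `0` otherwise. -/
theorem d_cohomology_dim (G : SimpleGraph V) (hG : G.IsTree) :
    cohDim (dmap G) (dmap G) =
      if ∃ R : Finset (Sym2 V), IsPerfectMatching G R then 1 else 0 := by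
  rw [cohDim_dmap]
  split_ifs with h
  · obtain ⟨R, hR⟩ := h
    have : Subsingleton {R : Finset (Sym2 V) // IsPerfectMatching G R} :=
      ⟨fun R R' => Subtype.ext (R.2.eq_of_isAcyclic hG.isAcyclic R'.2)⟩
    exact Nat.card_eq_one_iff_unique.mpr ⟨this, ⟨⟨R, hR⟩⟩⟩
  · have : IsEmpty {R : Finset (Sym2 V) // IsPerfectMatching G R} :=
      ⟨fun R => h ⟨R.1, R.2⟩⟩
    exact Nat.card_of_isEmpty

end Seifert
end

section
/- The polynomial det(tS − Sᵀ) does not depend on the enumeration of the vertices of T: if S and S' are the Seifert matrices of a finite tree T associated to two enumerations of its vertices, then det(tS − Sᵀ) = det(tS' − S'ᵀ) in ℤ[t]. -/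
open Polynomial Matrix

attribute [local instance] Classical.propDecidable

/-!
Expand `det (t S - Sᵀ)` over permutations `σ` of the vertices. The entry at `(σ v, v)` vanishes
unless `σ v = v`, where it is `1 - t`, or `σ v` is adjacent to `v`, where it is `t` or `-1`
according to which endpoint the enumeration puts first. In a forest such a permutation is an
involution, because a longer orbit would close a cycle. So each edge `{v, σ v}` swapped by `σ`
contributes `t · (-1) = -t` whichever endpoint comes first, and every term of the expansion is
independent of the enumeration.
-/

theorem Finset.prod_eq_prod_of_involutive {ι M : Type*} [CommMonoid M] {s : Finset ι}
    {f g : ι → M} {σ : ι → ι} (hσ : Function.Involutive σ) (hs : ∀ a ∈ s, σ a ∈ s)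
    (hfix : ∀ a ∈ s, σ a = a → f a = g a)
    (hpair : ∀ a ∈ s, f a * f (σ a) = g a * g (σ a)) :
    ∏ a ∈ s, f a = ∏ a ∈ s, g a := by
  classical
  induction s using Finset.strongInduction with | H s ih => ?_
  obtain rfl | ⟨x, hx⟩ := s.eq_empty_or_nonempty
  · simp
  have horbit : {x, σ x} ⊆ s := by simp [Finset.insert_subset_iff, hx, hs]
  have hrest : ∏ a ∈ s \ {x, σ x}, f a = ∏ a ∈ s \ {x, σ x}, g a := by
    refine ih _ (Finset.sdiff_ssubset horbit (by simp)) (fun a ha => ?_)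
      (fun a ha => hfix a (Finset.sdiff_subset ha)) (fun a ha => hpair a (Finset.sdiff_subset ha))
    simp only [Finset.mem_sdiff, Finset.mem_insert, Finset.mem_singleton] at ha ⊢
    refine ⟨hs a ha.1, fun h => ha.2 ?_⟩
    rcases h with h | h
    · exact Or.inr (by rw [← h, hσ])
    · exact Or.inl (hσ.injective h)
  rw [← Finset.prod_sdiff horbit, ← Finset.prod_sdiff horbit, hrest]
  congr 1
  by_cases hxfix : σ x = x
  · simp [hxfix, hfix x hx hxfix]
  · rw [Finset.prod_pair (Ne.symm hxfix), Finset.prod_pair (Ne.symm hxfix), hpair x hx]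

theorem SimpleGraph.IsAcyclic.involutive_of_forall_eq_or_adj {V : Type*} [Finite V]
    {G : SimpleGraph V} (hG : G.IsAcyclic) {σ : Equiv.Perm V}
    (hσ : ∀ v, σ v = v ∨ G.Adj (σ v) v) : Function.Involutive σ := by
  intro v
  by_contra hv
  obtain hfix | hadj := hσ v
  · exact hv (by rw [hfix, hfix])
  -- following the orbit of `v` back to `v` never uses the edge `s(σ v, v)`, so it is no bridge
  have hreach : ∀ k, (G.deleteEdges {s(σ v, v)}).Reachable (σ v) ((σ ^ (k + 1)) v) := by
    intro k
    induction k with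
    | zero => rfl
    | succ k ih =>
      rw [pow_succ', Equiv.Perm.mul_apply]
      set x := (σ ^ (k + 1)) v
      obtain hx | hx := hσ x
      · rwa [hx]
      by_cases hxv : x = v
      · rw [hxv]
      refine ih.trans (SimpleGraph.Adj.reachable ?_).symm
      rw [SimpleGraph.deleteEdges_adj, Set.mem_singleton_iff]
      refine ⟨hx, fun h => ?_⟩
      rcases Sym2.eq_iff.mp h with ⟨-, h⟩ | ⟨hσx, hxσ⟩
      · exact hxv h
      · exact hv (hxσ ▸ hσx)
  have hback := hreach (orderOf σ - 1)
  rw [Nat.sub_add_cancel (orderOf_pos σ), pow_orderOf_eq_one] at hback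
  exact SimpleGraph.isBridge_iff.mp (SimpleGraph.isAcyclic_iff_forall_adj_isBridge.mp hG hadj) hback

namespace Seifert

variable {V : Type}

noncomputable def alexMatrix (G : SimpleGraph V) {m : ℕ} (e : V ≃ Fin m) : Matrix V V ℤ[X] :=
  fun u v => if u = v then 1 - X else if G.Adj u v then (if e u < e v then X else -1) else 0

theorem alexMatrix_mul_alexMatrix_of_adj {G : SimpleGraph V} {m : ℕ} (e : V ≃ Fin m) {u v : V}
    (hadj : G.Adj u v) : alexMatrix G e u v * alexMatrix G e v u = -X := by
  rcases lt_or_gt_of_ne (e.injective.ne hadj.ne) with h | h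
  · simp [alexMatrix, hadj, hadj.symm, hadj.ne, hadj.ne.symm, h, h.not_gt]
  · simp [alexMatrix, hadj, hadj.symm, hadj.ne, hadj.ne.symm, h, h.not_gt]

variable [Fintype V]

theorem alexDet_eq_det_alexMatrix (G : SimpleGraph V) {m : ℕ} (e : V ≃ Fin m) :
    alexDet G e = (alexMatrix G e).det := by
  rw [alexDet, ← det_submatrix_equiv_self e]
  congr 1
  refine Matrix.ext fun u v => ?_
  simp only [submatrix_apply, Matrix.sub_apply, Matrix.smul_apply, transpose_apply, map_apply,
    seifertMatrix, alexMatrix, Equiv.symm_apply_apply, e.apply_eq_iff_eq, smul_eq_mul]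
  by_cases huv : u = v
  · subst huv
    simp [sub_eq_add_neg, add_comm]
  by_cases hadj : G.Adj u v
  · rcases lt_or_gt_of_ne (e.injective.ne huv) with h | h
    · simp [huv, Ne.symm huv, hadj, hadj.symm, h, h.not_gt]
    · simp [huv, Ne.symm huv, hadj, hadj.symm, h, h.not_gt]
  · simp [huv, Ne.symm huv, hadj, G.adj_comm v u]

theorem prod_alexMatrix_eq_of_isAcyclic {G : SimpleGraph V} (hG : G.IsAcyclic) {m : ℕ}
    (e e' : V ≃ Fin m) (σ : Equiv.Perm V) :
    ∏ v, alexMatrix G e (σ v) v = ∏ v, alexMatrix G e' (σ v) v := by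
  by_cases hσ : ∀ v, σ v = v ∨ G.Adj (σ v) v
  · have hinv := hG.involutive_of_forall_eq_or_adj hσ
    refine Finset.prod_eq_prod_of_involutive hinv (by simp)
      (fun v _ hv => by simp [alexMatrix, hv]) (fun v _ => ?_)
    rw [hinv v]
    rcases hσ v with hv | hadj
    · simp [hv, alexMatrix]
    · rw [alexMatrix_mul_alexMatrix_of_adj e hadj, alexMatrix_mul_alexMatrix_of_adj e' hadj]
  · push Not at hσ
    obtain ⟨v, hv, hnadj⟩ := hσ
    rw [Finset.prod_eq_zero (Finset.mem_univ v), Finset.prod_eq_zero (Finset.mem_univ v)] <;>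
      simp [alexMatrix, hv, hnadj]

/-- `det (t S - Sᵀ)` does not depend on the enumeration of the vertices. -/
theorem alexDet_independent_of_enumeration (G : SimpleGraph V) (hG : G.IsTree)
    {m : ℕ} (e e' : V ≃ Fin m) :
    alexDet G e = alexDet G e' := by
  simp only [alexDet_eq_det_alexMatrix, det_apply]
  exact Finset.sum_congr rfl fun σ _ => by
    rw [prod_alexMatrix_eq_of_isAcyclic hG.isAcyclic e e' σ]

end Seifert
end
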